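/- arXiv:2505.22464 — 3 statements merged into one kernel-verified Lean document; each statement's English description precedes it below -/
import Mathlib

section
/- The map (g, f) ↦ f ∘ g⁻¹ from Aff(n,ℝ) × Conv(ℝⁿ,ℝ) to Conv(ℝⁿ,ℝ) is continuous, where Aff(n,ℝ) is the group of invertible affine transformations of ℝⁿ and Conv(ℝⁿ,ℝ) carries the topology of locally uniform convergence. -/
/-- The space `Conv(ℝⁿ,ℝ)` of finite-valued convex functions on `ℝⁿ`, with the topology of
locally uniform (= compact-open) convergence. -/
def ConvFun (n : ℕ) : Type :=
  {f : C(EuclideanSpace ℝ (Fin n), ℝ) // ConvexOn ℝ Set.univ f}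

noncomputable instance (n : ℕ) : TopologicalSpace (ConvFun n) :=
  instTopologicalSpaceSubtype

/-- The group `Aff(n,ℝ)` of invertible affine transformations of `ℝⁿ`, realized as pairs
`(g, g⁻¹)` of (automatically continuous) affine self-maps of `ℝⁿ` that are mutually inverse,
topologized as a subset of the space of (continuous) affine maps `ℝⁿ → ℝⁿ`. -/
def AffGrp (n : ℕ) : Type :=
  {p : (EuclideanSpace ℝ (Fin n) →ᴬ[ℝ] EuclideanSpace ℝ (Fin n)) ×
       (EuclideanSpace ℝ (Fin n) →ᴬ[ℝ] EuclideanSpace ℝ (Fin n)) //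
    (∀ x, p.1 (p.2 x) = x) ∧ ∀ x, p.2 (p.1 x) = x}

noncomputable instance (n : ℕ) : TopologicalSpace (AffGrp n) :=
  instTopologicalSpaceSubtype

lemma convexOn_comp_affine {n : ℕ} {f : EuclideanSpace ℝ (Fin n) → ℝ}
    (hf : ConvexOn ℝ Set.univ f)
    (g : EuclideanSpace ℝ (Fin n) →ᵃ[ℝ] EuclideanSpace ℝ (Fin n)) :
    ConvexOn ℝ Set.univ (fun x => f (g x)) := by
  simpa [Function.comp_def] using hf.comp_affineMap g

namespace ContinuousAffineMap

variable {𝕜 V W : Type*} [NontriviallyNormedField 𝕜]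
  [NormedAddCommGroup V] [NormedSpace 𝕜 V] [NormedAddCommGroup W] [NormedSpace 𝕜 W]

-- `f ↦ (f 0, f.contLinear)` is an isometry, and `f x = f.contLinear x + f 0`.
instance : ContinuousEval (V →ᴬ[𝕜] W) V W where
  continuous_eval := by
    let D := decompLinearIsometryEquiv 𝕜 𝕜 V W
    have hD : Continuous fun p : (V →ᴬ[𝕜] W) × V => D p.1 := D.continuous.comp continuous_fst
    refine ((hD.snd.clm_apply continuous_snd).add hD.fst).congr fun p => ?_
    conv_rhs => rw [← D.symm_apply_apply p.1]
    rfl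

theorem continuous_toContinuousMap : Continuous fun f : V →ᴬ[𝕜] W => (f : C(V, W)) :=
  ContinuousMap.continuous_of_continuous_uncurry _ continuous_eval

theorem continuous_continuousMap_comp {Z : Type*} [TopologicalSpace Z] [LocallyCompactSpace W] :
    Continuous fun p : (V →ᴬ[𝕜] W) × C(W, Z) => p.2.comp (p.1 : C(V, W)) :=
  ContinuousMap.continuous_comp'.comp (continuous_toContinuousMap.prodMap continuous_id)

end ContinuousAffineMap

/-- the action map `(g, f) ↦ f ∘ g⁻¹` of `Aff(n,ℝ)` on `Conv(ℝⁿ,ℝ)` is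
continuous. -/
theorem statement2 (n : ℕ) :
    Continuous (fun p : AffGrp n × ConvFun n =>
      (⟨⟨fun x => p.2.1 (p.1.1.2 x),
          (p.2.1.continuous.comp p.1.1.2.continuous)⟩,
        convexOn_comp_affine p.2.2 p.1.1.2.toAffineMap⟩ : ConvFun n)) :=
  (ContinuousAffineMap.continuous_continuousMap_comp.comp
    ((continuous_subtype_val.comp continuous_fst).snd.prodMk
      (continuous_subtype_val.comp continuous_snd))).subtype_mk _
end

section
/- Let α ∈ ℕⁿ, F entire on ℂⁿ, and let g_α be the unique entire function such that no monomial in the power series expansion of F − g_α z^α is divisible by z^α. Then for every δ > 0 and every z ∈ ℂⁿ, |g_α(z)| ≤ (2ⁿ/δ^{|α|}) · ∏_{j=1}^n ((|z_j|+δ)/δ) · sup{|F(ξ)| : |Re ξ_j| ≤ |Re z_j|+δ, |Im ξ_j| ≤ |Im z_j|+δ, 1≤j≤n}. -/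
/-!
Let `M` be the supremum of `|F|` over the product of the closed `δ`-neighbourhoods of the
segments `[0, z_j]`; this product lies in the box, and in fact `|g_α(z)| ≤ M / δ^|α|`.

In one variable, `z^m g(z)` is the Taylor remainder of order `m` of `F` at `z`. Taylor's theorem
along `[0, z]` bounds it by `|z|^m / m!` times the supremum of `|F^(m)|` on the segment, and
Cauchy's estimate on the discs of radius `δ` centred on the segment bounds that supremum by
`m! M / δ^m`.

In several variables, shift first the exponents of the last `n - 1` variables. Freezing those
variables at `z'`, the result is a power series in the first variable whose `α₁`-shift evaluated
at `z₁` is `g_α(z)`; by induction it is bounded by `M / δ^(|α| - α₁)` on the neighbourhood of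
`[0, z₁]`, and the one-variable bound supplies the factor `δ^(-α₁)`.
-/

/-- `F` is entire with (everywhere absolutely convergent) power series expansion at `0` with
coefficients `a`. -/
def IsEntireWithCoeffs {n : ℕ} (a : (Fin n → ℕ) → ℂ) (F : (Fin n → ℂ) → ℂ) : Prop :=
  ∀ z : Fin n → ℂ, HasSum (fun β : Fin n → ℕ => a β * ∏ j, z j ^ β j) (F z)

open Finset Set Metric
open scoped Nat

noncomputable def taylorSum (f : ℂ → ℂ) (m : ℕ) (w : ℂ) : ℂ :=
  ∑ k ∈ range m, (k ! : ℂ)⁻¹ * iteratedDeriv k f 0 * w ^ k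

lemma hasDerivAt_taylorSum_succ (f : ℂ → ℂ) (m : ℕ) (w : ℂ) :
    HasDerivAt (taylorSum f (m + 1)) (taylorSum (deriv f) m w) w := by
  have h : HasDerivAt (taylorSum f (m + 1))
      (∑ k ∈ range (m + 1), (k ! : ℂ)⁻¹ * iteratedDeriv k f 0 * (k * w ^ (k - 1))) w :=
    HasDerivAt.fun_sum fun k _ => (hasDerivAt_pow k w).const_mul _
  convert h using 1
  rw [sum_range_succ', taylorSum]
  simp only [CharP.cast_eq_zero, zero_mul, mul_zero, add_zero, add_tsub_cancel_right,
    ← iteratedDeriv_succ']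
  refine sum_congr rfl fun k _ => ?_
  rw [Nat.factorial_succ]
  push_cast
  field_simp

lemma norm_sub_taylorSum_le {f : ℂ → ℂ} (hf : Differentiable ℂ f) (m : ℕ) {z : ℂ} {D : ℝ}
    (hD : ∀ t ∈ Icc (0 : ℝ) 1, ‖iteratedDeriv m f (t * z)‖ ≤ D) :
    ∀ s ∈ Icc (0 : ℝ) 1, ‖f (s * z) - taylorSum f m (s * z)‖ ≤ D * (s * ‖z‖) ^ m / m ! := by
  induction m generalizing f with
  | zero => simpa [taylorSum] using hD
  | succ m ih =>
    have hf' : Differentiable ℂ (deriv f) := fun w =>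
      ((hf.analyticAt w).deriv).differentiableAt
    have hpath : ∀ s : ℝ, HasDerivAt (fun s : ℝ => (s : ℂ) * z) z s := fun s => by
      simpa using ((hasDerivAt_id (s : ℂ)).mul_const z).comp_ofReal
    have hderiv : ∀ s : ℝ, HasDerivAt (fun s : ℝ => f (s * z) - taylorSum f (m + 1) (s * z))
        ((deriv f (s * z) - taylorSum (deriv f) m (s * z)) * z) s := fun s =>
      ((hf (s * z)).hasDerivAt.sub (hasDerivAt_taylorSum_succ f m _)).comp
        (h₂ := f - taylorSum f (m + 1)) s (hpath s)
    have hB : ∀ s : ℝ, HasDerivAt (fun s : ℝ => D * (s * ‖z‖) ^ (m + 1) / (m + 1)!)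
        (D * (s * ‖z‖) ^ m / m ! * ‖z‖) s := fun s => by
      have := (((hasDerivAt_id s).mul_const ‖z‖).pow (m + 1)).const_mul D
        |>.div_const ((m + 1)! : ℝ)
      simp only [id] at this
      refine this.congr_deriv ?_
      rw [Nat.factorial_succ]
      push_cast
      field_simp
    refine image_norm_le_of_norm_deriv_right_le_deriv_boundary
      (fun s _ => (hderiv s).continuousAt.continuousWithinAt)
      (fun s _ => (hderiv s).hasDerivWithinAt) (by simp [taylorSum, sum_range_succ']) hB
      fun s hs => ?_
    rw [norm_mul]
    gcongr
    refine ih (f := deriv f) hf' (fun t ht => ?_) s (Ico_subset_Icc_self hs)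
    rw [← iteratedDeriv_succ']
    exact hD t ht

lemma hasFPowerSeriesOnBall_ofScalars_of_hasSum {c : ℕ → ℂ} {f : ℂ → ℂ}
    (hf : ∀ w, HasSum (fun k => c k * w ^ k) (f w)) :
    HasFPowerSeriesOnBall f (FormalMultilinearSeries.ofScalars ℂ c) 0 ⊤ where
  r_le := by
    refine (FormalMultilinearSeries.radius_eq_top_of_summable_norm _ fun r => ?_).ge
    simpa [FormalMultilinearSeries.ofScalars_norm] using (hf r).summable.norm
  r_pos := ENNReal.zero_lt_top
  hasSum {y} _ := by
    simpa [FormalMultilinearSeries.ofScalars_apply_eq, mul_comm] using hf y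

lemma coeff_eq_iteratedDeriv_of_hasSum {c : ℕ → ℂ} {f : ℂ → ℂ}
    (hf : ∀ w, HasSum (fun k => c k * w ^ k) (f w)) (k : ℕ) :
    c k = (k ! : ℂ)⁻¹ * iteratedDeriv k f 0 := by
  have h := (hasFPowerSeriesOnBall_ofScalars_of_hasSum hf).factorial_smul (1 : ℂ) k
  rw [FormalMultilinearSeries.ofScalars_apply_eq, ← iteratedDeriv_eq_iteratedFDeriv] at h
  simp [← h, Nat.factorial_ne_zero]

lemma norm_shift_le_of_norm_le_on_cthickening_segment {c : ℕ → ℂ} {f : ℂ → ℂ}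
    (hf : ∀ w, HasSum (fun k => c k * w ^ k) (f w)) (m : ℕ) {z y : ℂ}
    (hy : HasSum (fun k => c (k + m) * z ^ k) y) {δ C : ℝ} (hδ : 0 < δ)
    (hC : ∀ w ∈ cthickening δ (segment ℝ 0 z), ‖f w‖ ≤ C) :
    ‖y‖ ≤ C / δ ^ m := by
  have hdiff : Differentiable ℂ f := fun w =>
    ((hasFPowerSeriesOnBall_ofScalars_of_hasSum hf).analyticAt_of_mem (by simp)).differentiableAt
  have hcauchy : ∀ t ∈ Icc (0 : ℝ) 1, ‖iteratedDeriv m f (t * z)‖ ≤ m ! * C / δ ^ m := by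
    intro t ht
    refine Complex.norm_iteratedDeriv_le_of_forall_mem_sphere_norm_le m hδ hdiff.diffContOnCl
      fun w hw => hC w (mem_cthickening_of_dist_le _ (t * z) _ _ ?_ hw.le)
    rw [segment_eq_image']
    exact ⟨t, ht, by simp⟩
  rcases eq_or_ne z 0 with rfl | hz
  · have hy0 : y = (m ! : ℂ)⁻¹ * iteratedDeriv m f 0 := by
      rw [← coeff_eq_iteratedDeriv_of_hasSum hf]
      simpa using hy.unique (hasSum_single 0 fun k hk => by simp [hk])
    have h0 := hcauchy 0 (by simp)
    rw [Complex.ofReal_zero, zero_mul] at h0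
    calc ‖y‖ = (m ! : ℝ)⁻¹ * ‖iteratedDeriv m f 0‖ := by simp [hy0]
      _ ≤ (m ! : ℝ)⁻¹ * (m ! * C / δ ^ m) := by gcongr
      _ = C / δ ^ m := by field_simp
  · have hrem : y * z ^ m = f z - taylorSum f m z := by
      have htail := (hasSum_nat_add_iff' m).2 (hf z)
      have hyz : HasSum (fun k => c (k + m) * z ^ (k + m)) (y * z ^ m) :=
        (hy.mul_right (z ^ m)).congr_fun fun k => by ring
      rw [hyz.unique htail, taylorSum]
      simp only [coeff_eq_iteratedDeriv_of_hasSum hf]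
    have htaylor := norm_sub_taylorSum_le hdiff m hcauchy 1 (by simp)
    rw [Complex.ofReal_one, one_mul, one_mul, ← hrem, norm_mul, norm_pow] at htaylor
    refine le_of_mul_le_mul_right (htaylor.trans_eq ?_) (by positivity : 0 < ‖z‖ ^ m)
    field_simp

lemma abs_re_im_le_of_mem_cthickening_segment {z w : ℂ} {δ : ℝ} (hδ : 0 ≤ δ)
    (hw : w ∈ cthickening δ (segment ℝ 0 z)) : |w.re| ≤ |z.re| + δ ∧ |w.im| ≤ |z.im| + δ := by
  have hcpt : IsCompact (segment ℝ 0 z) := by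
    rw [segment_eq_image']
    exact isCompact_Icc.image (by fun_prop)
  rw [hcpt.cthickening_eq_biUnion_closedBall hδ, segment_eq_image'] at hw
  obtain ⟨_, ⟨t, ht, rfl⟩, hwt⟩ := mem_iUnion₂.1 hw
  have hdist : ‖w - t * z‖ ≤ δ := by simpa [dist_eq_norm, Complex.real_smul] using hwt
  have hre := Complex.abs_re_le_norm (w - t * z)
  have him := Complex.abs_im_le_norm (w - t * z)
  simp only [Complex.sub_re, Complex.sub_im, Complex.re_ofReal_mul,
    Complex.im_ofReal_mul] at hre him
  have htre : |t * z.re| ≤ |z.re| := by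
    rw [abs_mul, abs_of_nonneg ht.1]; exact mul_le_of_le_one_left (abs_nonneg _) ht.2
  have htim : |t * z.im| ≤ |z.im| := by
    rw [abs_mul, abs_of_nonneg ht.1]; exact mul_le_of_le_one_left (abs_nonneg _) ht.2
  constructor
  · linarith [abs_sub_abs_le_abs_sub w.re (t * z.re)]
  · linarith [abs_sub_abs_le_abs_sub w.im (t * z.im)]

lemma Fin.cons_add_cons {α : Type*} [Add α] {n : ℕ} (x y : α) (v w : Fin n → α) :
    (Fin.cons x v : Fin (n + 1) → α) + Fin.cons y w = Fin.cons (x + y) (v + w) :=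
  Matrix.cons_add_cons x v y w

namespace IsEntireWithCoeffs

variable {n : ℕ}

lemma summable_norm_mul_prod_pow {a : (Fin n → ℕ) → ℂ} {F : (Fin n → ℂ) → ℂ}
    (hF : IsEntireWithCoeffs a F) {r : Fin n → ℝ} (hr : ∀ j, 0 ≤ r j) :
    Summable fun β => ‖a β‖ * ∏ j, r j ^ β j := by
  simpa [norm_prod, abs_of_nonneg (hr _)] using (hF fun j => (r j : ℂ)).summable.norm

lemma norm_le_tsum {a : (Fin n → ℕ) → ℂ} {F : (Fin n → ℂ) → ℂ}
    (hF : IsEntireWithCoeffs a F) {r : Fin n → ℝ} {ξ : Fin n → ℂ} (hξ : ∀ j, ‖ξ j‖ ≤ r j) :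
    ‖F ξ‖ ≤ ∑' β, ‖a β‖ * ∏ j, r j ^ β j := by
  have hr : ∀ j, 0 ≤ r j := fun j => (norm_nonneg _).trans (hξ j)
  refine (hF ξ).norm_le_of_bounded (hF.summable_norm_mul_prod_pow hr).hasSum fun β => ?_
  rw [norm_mul, norm_prod]
  gcongr with j
  rw [norm_pow]
  gcongr
  exact hξ j

lemma shift {a : (Fin n → ℕ) → ℂ} {F : (Fin n → ℂ) → ℂ}
    (hF : IsEntireWithCoeffs a F) (θ : Fin n → ℕ) :
    IsEntireWithCoeffs (fun γ => a (γ + θ)) fun z => ∑' γ, a (γ + θ) * ∏ j, z j ^ γ j := by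
  intro z
  have hmaj := (hF.summable_norm_mul_prod_pow (r := fun j => max ‖z j‖ 1)
    fun j => zero_le_one.trans (le_max_right _ _)).comp_injective (add_left_injective θ)
  refine (Summable.of_norm (hmaj.of_nonneg_of_le (fun γ => norm_nonneg _) fun γ => ?_)).hasSum
  simp only [Function.comp_apply, norm_mul, norm_prod, norm_pow, Pi.add_apply]
  gcongr with j
  calc ‖z j‖ ^ γ j ≤ max ‖z j‖ 1 ^ γ j := by gcongr; exact le_max_left _ _
    _ ≤ max ‖z j‖ 1 ^ (γ j + θ j) := pow_le_pow_right₀ (le_max_right _ _) (Nat.le_add_right _ _)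

section cons

variable {a : (Fin (n + 1) → ℕ) → ℂ} {F : (Fin (n + 1) → ℂ) → ℂ}

lemma hasSum_prod_cons (hF : IsEntireWithCoeffs a F) (w : ℂ) (ξ : Fin n → ℂ) :
    HasSum (fun q : ℕ × (Fin n → ℕ) => a (Fin.cons q.1 q.2) * (w ^ q.1 * ∏ j, ξ j ^ q.2 j))
      (F (Fin.cons w ξ)) := by
  simpa [Fin.prod_univ_succ, Function.comp_def, Fin.consEquiv] using
    (Fin.consEquiv fun _ => ℕ).hasSum_iff.2 (hF (Fin.cons w ξ))

lemma hasSum_head (hF : IsEntireWithCoeffs a F) (ξ : Fin n → ℂ) (w : ℂ) :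
    HasSum (fun k => (∑' γ, a (Fin.cons k γ) * ∏ j, ξ j ^ γ j) * w ^ k) (F (Fin.cons w ξ)) := by
  refine (hF.hasSum_prod_cons w ξ).prod_fiberwise fun k => ?_
  have hs : Summable fun γ => a (Fin.cons k γ) * ∏ j, ξ j ^ γ j := by
    simpa using (hF.hasSum_prod_cons 1 ξ).summable.prod_factor k
  simpa [tsum_mul_right, mul_left_comm, mul_assoc, mul_comm] using hs.hasSum.mul_right (w ^ k)

lemma comp_cons (hF : IsEntireWithCoeffs a F) (w : ℂ) :
    IsEntireWithCoeffs (fun γ => ∑' k, a (Fin.cons k γ) * w ^ k) fun ξ => F (Fin.cons w ξ) := by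
  intro ξ
  refine ((Equiv.prodComm _ _).hasSum_iff.2 (hF.hasSum_prod_cons w ξ)).prod_fiberwise fun γ => ?_
  have hs : Summable fun k => a (Fin.cons k γ) * w ^ k := by
    simpa using (hF.hasSum_prod_cons w 1).summable.prod_symm.prod_factor γ
  simpa [mul_assoc] using hs.hasSum.mul_right (∏ j, ξ j ^ γ j)

end cons

theorem norm_le_of_norm_le_on_pi_cthickening
    {a : (Fin n → ℕ) → ℂ} {F g : (Fin n → ℂ) → ℂ} (hF : IsEntireWithCoeffs a F) (α : Fin n → ℕ)
    (hg : IsEntireWithCoeffs (fun γ => a (γ + α)) g) (z : Fin n → ℂ) {δ C : ℝ} (hδ : 0 < δ)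
    (hC : ∀ ξ ∈ univ.pi fun j => cthickening δ (segment ℝ 0 (z j)), ‖F ξ‖ ≤ C) :
    ‖g z‖ ≤ C / δ ^ ∑ j, α j := by
  induction n generalizing C with
  | zero =>
    have hgF : g z = F z := (hg z).unique <| by
      convert hF z using 3 with γ
      exact congrArg a (Subsingleton.elim _ _)
    simpa [hgF] using hC z fun j => j.elim0
  | succ n ih =>
    obtain ⟨α₀, α', rfl⟩ : ∃ α₀ α', α = Fin.cons α₀ α' := ⟨_, _, (Fin.cons_self_tail α).symm⟩
    obtain ⟨z₀, z', rfl⟩ : ∃ z₀ z', z = Fin.cons z₀ z' := ⟨_, _, (Fin.cons_self_tail z).symm⟩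
    have hG := hF.shift (Fin.cons 0 α')
    set G : (Fin (n + 1) → ℂ) → ℂ := fun ξ => ∑' γ : Fin (n + 1) → ℕ,
      a (γ + Fin.cons 0 α') * ∏ j, ξ j ^ γ j
    have hbound : ∀ w ∈ cthickening δ (segment ℝ 0 z₀),
        ‖G (Fin.cons w z')‖ ≤ C / δ ^ ∑ j, α' j := by
      intro w hw
      refine ih (g := fun ξ => G (Fin.cons w ξ)) (hF.comp_cons w) α' ?_ z' fun ξ hξ => hC _ ?_
      · simpa [Fin.cons_add_cons] using hG.comp_cons w
      · rw [mem_univ_pi, Fin.forall_fin_succ]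
        exact ⟨hw, mem_univ_pi.1 hξ⟩
    have hshift := norm_shift_le_of_norm_le_on_cthickening_segment (hG.hasSum_head z') α₀
      (by simpa [Fin.cons_add_cons] using hg.hasSum_head z' z₀) hδ hbound
    simpa only [Fin.sum_cons, pow_add, div_div, mul_comm] using hshift

end IsEntireWithCoeffs

/-- the Cauchy estimate for the unique entire function `g_α` such that no monomial
of the power series of `F − g_α z^α` is divisible by `z^α` (i.e. `b γ = a (γ + α)`):
`|g_α(z)| ≤ (2ⁿ/δ^{|α|}) ∏_j ((|z_j|+δ)/δ) · sup {|F(ξ)| : |Re ξ_j| ≤ |Re z_j|+δ,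
|Im ξ_j| ≤ |Im z_j|+δ}`. -/
theorem statement4 {n : ℕ} (α : Fin n → ℕ) (F g : (Fin n → ℂ) → ℂ)
    (a b : (Fin n → ℕ) → ℂ) (hF : IsEntireWithCoeffs a F) (hg : IsEntireWithCoeffs b g)
    (hdiv : ∀ β : Fin n → ℕ, α ≤ β → a β = b (β - α)) :
    ∀ δ : ℝ, 0 < δ → ∀ z : Fin n → ℂ,
      ‖g z‖ ≤ (2 ^ n / δ ^ (∑ j, α j)) * (∏ j, (‖z j‖ + δ) / δ) *
        sSup ((fun ξ => ‖F ξ‖) ''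
          {ξ : Fin n → ℂ | ∀ j, |(ξ j).re| ≤ |(z j).re| + δ ∧ |(ξ j).im| ≤ |(z j).im| + δ}) := by
  intro δ hδ z
  set S := {ξ : Fin n → ℂ | ∀ j, |(ξ j).re| ≤ |(z j).re| + δ ∧ |(ξ j).im| ≤ |(z j).im| + δ}
  have hg' : IsEntireWithCoeffs (fun γ => a (γ + α)) g := by
    convert hg using 3 with γ
    simpa using hdiv (γ + α) le_add_self
  have hbdd : BddAbove ((fun ξ => ‖F ξ‖) '' S) :=
    ⟨_, forall_mem_image.2 fun ξ hξ => hF.norm_le_tsum fun j =>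
      (Complex.norm_le_abs_re_add_abs_im _).trans (add_le_add (hξ j).1 (hξ j).2)⟩
  have hzS : z ∈ S := fun j => ⟨le_add_of_nonneg_right hδ.le, le_add_of_nonneg_right hδ.le⟩
  have hM0 : 0 ≤ sSup ((fun ξ => ‖F ξ‖) '' S) :=
    (norm_nonneg _).trans (le_csSup hbdd ⟨z, hzS, rfl⟩)
  have hprod : 1 ≤ ∏ j, (‖z j‖ + δ) / δ :=
    Finset.one_le_prod fun j _ => by rw [le_div_iff₀ hδ]; linarith [norm_nonneg (z j)]
  calc ‖g z‖ ≤ sSup ((fun ξ => ‖F ξ‖) '' S) / δ ^ ∑ j, α j :=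
        hF.norm_le_of_norm_le_on_pi_cthickening α hg' z hδ fun ξ hξ => le_csSup hbdd
          ⟨ξ, fun j => abs_re_im_le_of_mem_cthickening_segment hδ.le (hξ j trivial), rfl⟩
    _ = 1 / δ ^ (∑ j, α j) * 1 * sSup ((fun ξ => ‖F ξ‖) '' S) := by ring
    _ ≤ _ := by gcongr; exact one_le_pow₀ one_le_two
end

section
/- Let F be an entire function on ℂᵐ × ℂⁿ and α ∈ ℕᵐ such that no term of the power series expansion of F at 0 contains a monomial divisible by w₁^{α'} for any α' ≥ α with α' ≠ α. Then for every β ∈ ℕⁿ there exists a unique entire function g on ℂⁿ (depending only on the second variable) such that no term of the power series expansion of F(w₁,w₂) − g(w₂)·w₁^α·w₂^β contains a monomial divisible by w₁^α·w₂^β. -/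
/-! The coefficients of `g` are forced to be `c δ = a (α, δ + β)`, and `hα` makes every other
coefficient of `F` with exponent `≥ (α, β)` vanish. -/

/-- `F` is entire on `ℂᵐ × ℂⁿ` with (everywhere absolutely convergent) power series expansion
at `0` with coefficients `a`, indexed by pairs of multi-indices. -/
def IsEntireWithCoeffs2 {m n : ℕ} (a : (Fin m → ℕ) × (Fin n → ℕ) → ℂ)
    (F : (Fin m → ℂ) × (Fin n → ℂ) → ℂ) : Prop :=
  ∀ w : (Fin m → ℂ) × (Fin n → ℂ),
    HasSum (fun γ : (Fin m → ℕ) × (Fin n → ℕ) =>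
      a γ * (∏ j, w.1 j ^ γ.1 j) * ∏ j, w.2 j ^ γ.2 j) (F w)

open Finset

lemma prod_norm_pow_le_prod_max_one_pow {ι 𝕜 : Type*} [Fintype ι] [NormedField 𝕜]
    (z : ι → 𝕜) (δ β : ι → ℕ) :
    ∏ j, ‖z j‖ ^ δ j ≤ ∏ j, max ‖z j‖ 1 ^ (δ j + β j) :=
  prod_le_prod (fun j _ => by positivity) fun j _ =>
    calc ‖z j‖ ^ δ j ≤ max ‖z j‖ 1 ^ δ j := pow_le_pow_left₀ (norm_nonneg _) (le_max_left _ _) _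
      _ ≤ max ‖z j‖ 1 ^ (δ j + β j) := pow_le_pow_right₀ (le_max_right _ _) le_self_add

/-- Every slice `δ ↦ a (α, δ + β)` is again the coefficient family of an entire function: its
series at `z` is dominated by the series of `F` at `(1, R)`, where `R j = max ‖z j‖ 1`. -/
lemma IsEntireWithCoeffs2.summable_slice {m n : ℕ} {a : (Fin m → ℕ) × (Fin n → ℕ) → ℂ}
    {F : (Fin m → ℂ) × (Fin n → ℂ) → ℂ} (hF : IsEntireWithCoeffs2 a F)
    (α : Fin m → ℕ) (β : Fin n → ℕ) (z : Fin n → ℂ) :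
    Summable fun δ : Fin n → ℕ => a (α, δ + β) * ∏ j, z j ^ δ j := by
  set R : Fin n → ℂ := fun j => (max ‖z j‖ 1 : ℝ)
  have hR : ∀ j, ‖R j‖ = max ‖z j‖ 1 := fun j =>
    Complex.norm_of_nonneg (zero_le_one.trans (le_max_right _ _))
  have hinj : Function.Injective fun δ : Fin n → ℕ => (α, δ + β) :=
    fun δ₁ δ₂ h => add_left_injective β (congrArg Prod.snd h)
  have hdom : Summable fun δ : Fin n → ℕ =>
      ‖a (α, δ + β) * (∏ j, (1 : ℂ) ^ α j) * ∏ j, R j ^ (δ + β) j‖ :=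
    summable_norm_iff.mpr ((hF (1, R)).summable.comp_injective hinj)
  refine hdom.of_norm_bounded fun δ => ?_
  simp only [norm_mul, one_pow, prod_const_one, mul_one, norm_prod, norm_pow, hR,
    Pi.add_apply]
  exact mul_le_mul_of_nonneg_left (prod_norm_pow_le_prod_max_one_pow z δ β) (norm_nonneg _)

lemma slice_eq_of_coeff_eq {m n : ℕ} {a : (Fin m → ℕ) × (Fin n → ℕ) → ℂ} {α : Fin m → ℕ}
    {β : Fin n → ℕ} {c : (Fin n → ℕ) → ℂ}
    (hc : ∀ γ : (Fin m → ℕ) × (Fin n → ℕ), α ≤ γ.1 → β ≤ γ.2 →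
      a γ = if γ.1 = α then c (γ.2 - β) else 0) :
    c = fun δ => a (α, δ + β) := by
  funext δ
  simpa using (hc (α, δ + β) le_rfl le_add_self).symm

/-- if no term of the power series of `F` contains a monomial divisible by
`w₁^{α'}` for some `α' ≥ α`, `α' ≠ α`, then for every `β` there is a unique entire function `g`
on `ℂⁿ` (a function of the second variable only) such that no term of the power series of
`F − g(w₂)·w₁^α·w₂^β` contains a monomial divisible by `w₁^α w₂^β`; i.e. for all
`γ = (γ₁,γ₂) ≥ (α,β)` the coefficient `a γ` equals the corresponding coefficient of
`g(w₂) w₁^α w₂^β`. -/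
theorem statement5 {m n : ℕ} (α : Fin m → ℕ) (F : (Fin m → ℂ) × (Fin n → ℂ) → ℂ)
    (a : (Fin m → ℕ) × (Fin n → ℕ) → ℂ) (hF : IsEntireWithCoeffs2 a F)
    (hα : ∀ γ : (Fin m → ℕ) × (Fin n → ℕ), α ≤ γ.1 → γ.1 ≠ α → a γ = 0) :
    ∀ β : Fin n → ℕ, ∃! g : (Fin n → ℂ) → ℂ, ∃ c : (Fin n → ℕ) → ℂ,
      (∀ z : Fin n → ℂ, HasSum (fun δ : Fin n → ℕ => c δ * ∏ j, z j ^ δ j) (g z)) ∧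
      ∀ γ : (Fin m → ℕ) × (Fin n → ℕ), α ≤ γ.1 → β ≤ γ.2 →
        a γ = if γ.1 = α then c (γ.2 - β) else 0 := by
  intro β
  refine ⟨fun z => ∑' δ, a (α, δ + β) * ∏ j, z j ^ δ j,
    ⟨_, fun z => (hF.summable_slice α β z).hasSum, fun γ hγ₁ hγ₂ => ?_⟩, ?_⟩
  · split_ifs with h
    · rw [← h, tsub_add_cancel_of_le hγ₂]
    · exact hα γ hγ₁ h
  · rintro g ⟨c, hg, hc⟩
    obtain rfl := slice_eq_of_coeff_eq hc
    exact funext fun z => (hg z).tsum_eq.symm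
end
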